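/- Let p ≥ 1, n ≥ 1, γ > 0, y_1,…,y_n ∈ ℝ^p, and let Ω be a symmetric positive definite p×p real matrix. Then the Gaussian γ-likelihood has the explicit form exp[ (1/γ) log((1/n) Σ_{i=1}^n f(y_i|Ω)^γ) − (1/(1+γ)) log ∫_{ℝ^p} f(y|Ω)^{1+γ} dy ] = (2π)^{−p/(2(1+γ))} (1+γ)^{p/(2(1+γ))} n^{−1/γ} |Ω|^{1/(2(1+γ))} (Σ_{i=1}^n exp(−(γ/2) y_iᵀΩy_i))^{1/γ}. -/

import Mathlib

open MeasureTheory Matrix Filter Topology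
open Real

lemma gauss_base (p : ℕ) (c : ℝ) (hc : 0 < c) :
    ∫ w : Fin p → ℝ, Real.exp (-c * (w ⬝ᵥ w)) = (π / c) ^ ((p : ℝ) / 2) := by
  have h1 : ∀ w : Fin p → ℝ, Real.exp (-c * (w ⬝ᵥ w)) = ∏ i, Real.exp (-c * (w i) ^ 2) := by
    intro w
    rw [← Real.exp_sum, dotProduct, Finset.mul_sum]
    congr 1; apply Finset.sum_congr rfl; intro i _; ring
  simp_rw [h1]
  rw [volume_pi, MeasureTheory.integral_fintype_prod_eq_pow (ι := Fin p) (fun x => Real.exp (-c * x ^ 2)),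
    integral_gaussian, ← Real.rpow_natCast, Real.sqrt_eq_rpow, ← Real.rpow_mul (by positivity)]
  norm_num
  ring_nf

lemma gauss_mat {p : ℕ} (Ω : Matrix (Fin p) (Fin p) ℝ) (hΩ : Ω.PosDef) (c : ℝ) (hc : 0 < c) :
    ∫ v : Fin p → ℝ, Real.exp (-c * (v ⬝ᵥ (Ω *ᵥ v))) =
      (π / c) ^ ((p : ℝ) / 2) * Ω.det ^ (-(1 / 2) : ℝ) := by
  open scoped MatrixOrder in set A := CFC.sqrt Ω with hAdef
  have hAA : A * A = Ω := by open scoped MatrixOrder in exact CFC.sqrt_mul_sqrt_self Ω hΩ.posSemidef.nonneg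
  have hAT : Aᵀ = A := by
    have := by open scoped MatrixOrder in exact (CFC.sqrt_nonneg Ω).posSemidef.1
    rw [Matrix.IsHermitian] at this
    simpa using this
  have hdsq : A.det * A.det = Ω.det := by rw [← Matrix.det_mul, hAA]
  have hd0 : A.det ≠ 0 := by
    intro h; rw [h, mul_zero] at hdsq; exact (ne_of_gt hΩ.det_pos) hdsq.symm
  have hq : ∀ v : Fin p → ℝ, v ⬝ᵥ (Ω *ᵥ v) = (A *ᵥ v) ⬝ᵥ (A *ᵥ v) := by
    intro v
    rw [← hAA, ← Matrix.mulVec_mulVec, Matrix.dotProduct_mulVec, ← Matrix.mulVec_transpose, hAT]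
  have hg : Continuous (fun w : Fin p → ℝ => Real.exp (-c * (w ⬝ᵥ w))) := by
    apply Real.continuous_exp.comp
    apply Continuous.mul continuous_const
    unfold dotProduct
    exact continuous_finset_sum _ (fun i _ => (continuous_apply i).mul (continuous_apply i))
  have hdet : LinearMap.det (Matrix.toLin' A) ≠ 0 := by rwa [LinearMap.det_toLin']
  have hmap := Measure.map_linearMap_addHaar_pi_eq_smul_addHaar (f := Matrix.toLin' A) hdet volume
  have hcont : Continuous (Matrix.toLin' A) := LinearMap.continuous_of_finiteDimensional _
  have key : ∫ v : Fin p → ℝ, Real.exp (-c * (v ⬝ᵥ (Ω *ᵥ v)))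
      = |A.det|⁻¹ * ∫ w : Fin p → ℝ, Real.exp (-c * (w ⬝ᵥ w)) := by
    calc ∫ v : Fin p → ℝ, Real.exp (-c * (v ⬝ᵥ (Ω *ᵥ v)))
        = ∫ v : Fin p → ℝ, (fun w => Real.exp (-c * (w ⬝ᵥ w))) (Matrix.toLin' A v) := by
          simp only [Matrix.toLin'_apply]
          exact integral_congr_ae (Filter.Eventually.of_forall fun v => by simp only [hq v])
      _ = ∫ w, Real.exp (-c * (w ⬝ᵥ w)) ∂(Measure.map (Matrix.toLin' A) volume) :=
          (integral_map hcont.aemeasurable hg.aestronglyMeasurable).symm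
      _ = |A.det|⁻¹ * ∫ w : Fin p → ℝ, Real.exp (-c * (w ⬝ᵥ w)) := by
          rw [hmap, integral_smul_measure, ENNReal.toReal_ofReal (by positivity), smul_eq_mul,
            LinearMap.det_toLin', abs_inv]
  rw [key, gauss_base p c hc]
  have habs : |A.det| = Ω.det ^ ((1:ℝ)/2) := by
    rw [← Real.sqrt_sq_eq_abs, Real.sqrt_eq_rpow, sq, hdsq]
  rw [habs, ← Real.rpow_neg hΩ.det_pos.le]
  ring_nf

/-- The `N_p(0, Ω⁻¹)` density `f(y|Ω) = (2π)^{−p/2} |Ω|^{1/2} exp(−yᵀΩy/2)`. -/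
noncomputable def gaussDens {p : ℕ} (Ω : Matrix (Fin p) (Fin p) ℝ) (y : Fin p → ℝ) : ℝ :=
  (2 * Real.pi) ^ (-(p : ℝ) / 2) * Ω.det ^ (1 / 2 : ℝ) * Real.exp (-(y ⬝ᵥ (Ω *ᵥ y)) / 2)

/-- Explicit form of the Gaussian γ-likelihood. -/
theorem stmt17 (p n : ℕ) (hp : 1 ≤ p) (hn : 1 ≤ n) (γ : ℝ) (hγ : 0 < γ)
    (y : Fin n → (Fin p → ℝ)) (Ω : Matrix (Fin p) (Fin p) ℝ) (hΩ : Ω.PosDef) :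
    Real.exp ((1 / γ) * Real.log ((1 / (n : ℝ)) * ∑ i : Fin n, gaussDens Ω (y i) ^ γ) -
        (1 / (1 + γ)) * Real.log (∫ v : Fin p → ℝ, gaussDens Ω v ^ (1 + γ))) =
      (2 * Real.pi) ^ (-(p : ℝ) / (2 * (1 + γ))) * (1 + γ) ^ ((p : ℝ) / (2 * (1 + γ))) *
        (n : ℝ) ^ (-(1 / γ)) * Ω.det ^ (1 / (2 * (1 + γ))) *
        (∑ i : Fin n, Real.exp (-(γ / 2) * (y i ⬝ᵥ (Ω *ᵥ y i)))) ^ (1 / γ) := by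
  have hd : (0:ℝ) < Ω.det := hΩ.det_pos
  have hP : (0:ℝ) < 2 * π := by positivity
  have h1γ : (0:ℝ) < 1 + γ := by linarith
  have hnpos : (0:ℝ) < n := by exact_mod_cast hn
  -- pointwise power of the density
  have hf : ∀ (v : Fin p → ℝ) (s : ℝ), 0 < s → gaussDens Ω v ^ s =
      (2*π) ^ (-(p:ℝ)/2*s) * Ω.det ^ (s/2) * Real.exp (-(s/2) * (v ⬝ᵥ (Ω *ᵥ v))) := by
    intro v s _
    unfold gaussDens
    rw [Real.mul_rpow (by positivity) (Real.exp_pos _).le,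
      Real.mul_rpow (by positivity) (by positivity),
      ← Real.rpow_mul (by positivity), ← Real.rpow_mul hd.le,
      Real.rpow_def_of_pos (Real.exp_pos _), Real.log_exp]
    rw [show (1/2 : ℝ) * s = s/2 by ring, show -(v ⬝ᵥ (Ω *ᵥ v)) / 2 * s = -(s/2) * (v ⬝ᵥ (Ω *ᵥ v)) by ring]
  set S : ℝ := ∑ i : Fin n, Real.exp (-(γ / 2) * (y i ⬝ᵥ (Ω *ᵥ y i))) with hSdef
  have hS : 0 < S := by
    apply Finset.sum_pos (fun i _ => Real.exp_pos _)
    haveI : Nonempty (Fin n) := Fin.pos_iff_nonempty.mp hn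
    exact Finset.univ_nonempty
  -- the sum
  have hNum : (1 / (n : ℝ)) * ∑ i : Fin n, gaussDens Ω (y i) ^ γ =
      (1/(n:ℝ)) * ((2*π) ^ (-(p:ℝ)/2*γ) * Ω.det ^ (γ/2) * S) := by
    congr 1
    rw [hSdef, Finset.mul_sum]
    apply Finset.sum_congr rfl
    intro i _
    rw [hf (y i) γ hγ]
  have hN : 0 < (1/(n:ℝ)) * ((2*π) ^ (-(p:ℝ)/2*γ) * Ω.det ^ (γ/2) * S) := by positivity
  -- the integral
  have hI : (∫ v : Fin p → ℝ, gaussDens Ω v ^ (1 + γ)) =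
      (2*π) ^ (-(p:ℝ)/2*γ) * Ω.det ^ (γ/2) * (1+γ) ^ (-(p:ℝ)/2) := by
    have : (∫ v : Fin p → ℝ, gaussDens Ω v ^ (1 + γ)) =
        ∫ v : Fin p → ℝ, ((2*π) ^ (-(p:ℝ)/2*(1+γ)) * Ω.det ^ ((1+γ)/2)) *
          Real.exp (-((1+γ)/2) * (v ⬝ᵥ (Ω *ᵥ v))) := by
      apply integral_congr_ae (Filter.Eventually.of_forall fun v => ?_)
      rw [hf v (1+γ) h1γ]
    rw [this, integral_const_mul, gauss_mat Ω hΩ ((1+γ)/2) (by positivity)]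
    rw [show π / ((1+γ)/2) = (2*π) / (1+γ) by field_simp]
    have hq : (0:ℝ) < (2*π)/(1+γ) := by positivity
    simp only [Real.rpow_def_of_pos hP, Real.rpow_def_of_pos hd, Real.rpow_def_of_pos h1γ,
      Real.rpow_def_of_pos hq, Real.log_div hP.ne' h1γ.ne', ← Real.exp_add]
    congr 1
    ring
  have hIpos : 0 < (2*π) ^ (-(p:ℝ)/2*γ) * Ω.det ^ (γ/2) * (1+γ) ^ (-(p:ℝ)/2) := by positivity
  rw [hNum, hI]
  have hlogN : Real.log ((1/(n:ℝ)) * ((2*π) ^ (-(p:ℝ)/2*γ) * Ω.det ^ (γ/2) * S))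
      = -Real.log n + ((-(p:ℝ)/2*γ) * Real.log (2*π) + (γ/2) * Real.log Ω.det + Real.log S) := by
    rw [Real.log_mul (by positivity : (0:ℝ) < 1/(n:ℝ)).ne' (by positivity : (0:ℝ) < (2*π) ^ (-(p:ℝ)/2*γ) * Ω.det ^ (γ/2) * S).ne',
      Real.log_mul (by positivity : (0:ℝ) < (2*π) ^ (-(p:ℝ)/2*γ) * Ω.det ^ (γ/2)).ne' hS.ne',
      Real.log_mul (by positivity : (0:ℝ) < (2*π) ^ (-(p:ℝ)/2*γ)).ne' (by positivity : (0:ℝ) < Ω.det ^ (γ/2)).ne',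
      one_div, Real.log_inv, Real.log_rpow hP, Real.log_rpow hd]
  have hlogI : Real.log ((2*π) ^ (-(p:ℝ)/2*γ) * Ω.det ^ (γ/2) * (1+γ) ^ (-(p:ℝ)/2))
      = (-(p:ℝ)/2*γ) * Real.log (2*π) + (γ/2) * Real.log Ω.det + (-(p:ℝ)/2) * Real.log (1+γ) := by
    rw [Real.log_mul (by positivity : (0:ℝ) < (2*π) ^ (-(p:ℝ)/2*γ) * Ω.det ^ (γ/2)).ne'
        (by positivity : (0:ℝ) < (1+γ) ^ (-(p:ℝ)/2)).ne',
      Real.log_mul (by positivity : (0:ℝ) < (2*π) ^ (-(p:ℝ)/2*γ)).ne'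
        (by positivity : (0:ℝ) < Ω.det ^ (γ/2)).ne',
      Real.log_rpow hP, Real.log_rpow hd, Real.log_rpow h1γ]
  rw [hlogN, hlogI]
  simp only [Real.rpow_def_of_pos hP, Real.rpow_def_of_pos h1γ, Real.rpow_def_of_pos hnpos,
    Real.rpow_def_of_pos hd, Real.rpow_def_of_pos hS, ← Real.exp_add]
  congr 1
  field_simp
  ring
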